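/- Let I be a closed unbounded set of ordinals with increasing enumeration ν ↦ κ_ν, and let B ⊆ I be limit suitable with min I ∈ B. Then: (1) for every tail traversal b of B, the subsequence of B determined by b (the union of the closed blocks of B below the members of b) is a suitable set; and (2) every suitable set B̂ ⊆ B is contained in the subsequence of B determined by some tail traversal of B. -/

import Mathlib

/-!
Let `G` be a gap of `B` with foot `λ`. Since `min I ∈ B`, `λ ≠ 0`, so `λ = κ_{ν+ω}` is a limit
point of `B` lying in `G`. The points of `I` in `(κ_ν, λ)` are the successor points
`κ_{ν+n+1}`; as the closure of `B` is closed under immediate predecessors and these are not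
limit points, they all lie in `B`, so the tail of `G` is cofinal in `λ`. On the other hand, a
point of `I \ B` below `λ` lies in a bounded gap, and the member of `B` closing that gap is a
limit point of `I` of uncountable cofinality below `λ`, hence at most `σ'`. Thus the members
of `I \ B` below `λ` stay below the tail, tails of different gaps are disjoint,
and the subsequence determined by `b` has no member in `[γ, λ)` when `γ ∈ b` is in the tail
of `G`. This makes the subsequence closed; it contains every limit point of `I` in `B`, which
gives condition (b) at the points `β = δ'`, and the other conditions are inherited from `B`.

Conversely, a suitable `B̂ ⊆ B` is closed and omits the foot `λ`, a limit point of `B`, so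
`B̂ ∩ λ` is bounded below `λ`; picking `γ` in the tail of `G` above that bound for every gap
gives a tail traversal whose subsequence contains `B̂`.
-/

open Set

noncomputable section

/-- `l` is a limit point of the set `S` of ordinals: `l > 0` and `sup (S ∩ l) = l`. -/
def IsLimitPoint (S : Set Ordinal) (l : Ordinal) : Prop :=
  0 < l ∧ sSup (S ∩ Iio l) = l

/-- A set of ordinals is closed if it contains all of its limit points. -/
def IsClosedSet (S : Set Ordinal) : Prop :=
  ∀ l, IsLimitPoint S l → l ∈ S

/-- A set of ordinals is unbounded (in the class of all ordinals). -/
def IsUnboundedSet (S : Set Ordinal) : Prop :=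
  ∀ a, ∃ b ∈ S, a < b

/-- `B` is a suitable subset of `I`: it is a countable closed subset of `I`, every member of `B`
which is a limit point of `I` of countable cofinality is a limit point of `B`, and `B` is closed
under immediate predecessors in `I`. -/
def Suitable (I B : Set Ordinal) : Prop :=
  B ⊆ I ∧ B.Countable ∧ IsClosedSet B ∧
  (∀ β ∈ B, IsLimitPoint I β → β.cof ≤ Cardinal.aleph0 → IsLimitPoint B β) ∧
  (∀ β ∈ B, ∀ m, IsGreatest (I ∩ Iio β) m → m ∈ B)

/-- `G` is a gap of `B` (relative to `I`): a maximal nonempty convex subset of `I \ B`. -/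
def IsGap (I B G : Set Ordinal) : Prop :=
  G.Nonempty ∧ G ⊆ I \ B ∧
  (∀ x ∈ G, ∀ y ∈ G, ∀ z ∈ I \ B, x ≤ z → z ≤ y → z ∈ G) ∧
  ∀ G', G ⊆ G' → G' ⊆ I \ B →
    (∀ x ∈ G', ∀ y ∈ G', ∀ z ∈ I \ B, x ≤ z → z ≤ y → z ∈ G') → G' = G

/-- The foot `λ` of a gap `G` of `B`: `sup({0} ∪ {β ∈ B : β < inf G})`. -/
def GapFoot (B G : Set Ordinal) : Ordinal :=
  sSup (insert 0 {β ∈ B | β < sInf G})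

/-- `B` is a limit suitable subset of `I`. -/
def LimitSuitable (I B : Set Ordinal) : Prop :=
  Suitable I (B ∪ {l | IsLimitPoint B l}) ∧
  ∀ G, IsGap I B G →
    ((IsUnboundedSet G ∧ G = I ∩ Ici (GapFoot B G)) ∨
     (∃ δ, IsLeast {β ∈ B | ∀ g ∈ G, g < β} δ ∧
        IsLimitPoint I δ ∧ Cardinal.aleph0 < δ.cof ∧
        G = I ∩ Ico (GapFoot B G) δ)) ∧
    (GapFoot B G ≠ 0 →
      ∃ ν : Ordinal, GapFoot B G = Ordinal.enumOrd I (ν + Ordinal.omega0))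

/-- The tail of a gap `G` of `B`: `B ∩ (σ', λ)`, where `λ` is the foot of the gap and `σ'` is
the supremum of the members of `B` below the gap that are limit points of `I`. -/
def GapTail (I B G : Set Ordinal) : Set Ordinal :=
  B ∩ Ioo (sSup {β ∈ B | β < sInf G ∧ IsLimitPoint I β}) (GapFoot B G)

/-- `b` is a tail traversal of `B`: a subset of `B` containing exactly one element of the tail
of each gap of `B`, all of whose elements lie in such tails. -/
def TailTraversal (I B b : Set Ordinal) : Prop :=
  b ⊆ B ∧ (∀ G, IsGap I B G → ∃! γ, γ ∈ b ∧ γ ∈ GapTail I B G) ∧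
  ∀ γ ∈ b, ∃ G, IsGap I B G ∧ γ ∈ GapTail I B G

/-- The closed block of `B` below `γ`, for `γ` in the tail of the gap `G`:
`[δ', γ) ∩ B` where `δ' = sup((I \ B) ∩ λ)` and `λ` is the foot of `G`. -/
def ClosedBlock (I B G : Set Ordinal) (γ : Ordinal) : Set Ordinal :=
  Ico (sSup ((I \ B) ∩ Iio (GapFoot B G))) γ ∩ B

/-- The subsequence of `B` determined by a tail traversal `b`: the union of the closed blocks of
`B` below the members of `b`. -/
def DeterminedSub (I B b : Set Ordinal) : Set Ordinal :=
  {x | ∃ γ ∈ b, ∃ G, IsGap I B G ∧ γ ∈ GapTail I B G ∧ x ∈ ClosedBlock I B G γ}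


section LimitPoints

variable {S T : Set Ordinal} {l : Ordinal}

theorem isLimitPoint_iff : IsLimitPoint S l ↔ 0 < l ∧ ∀ c < l, ∃ x ∈ S, c < x ∧ x < l := by
  refine and_congr_right fun _ => ⟨fun h c hc => ?_, fun h => ?_⟩
  · obtain ⟨x, ⟨hxS, hxl⟩, hcx⟩ := exists_lt_of_lt_csSup' (h ▸ hc)
    exact ⟨x, hxS, hcx, hxl⟩
  · refine le_antisymm (csSup_le' fun x hx => hx.2.le) (le_of_forall_lt fun c hc => ?_)
    obtain ⟨x, hxS, hcx, hxl⟩ := h c hc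
    exact hcx.trans_le (le_csSup ⟨l, fun y hy => hy.2.le⟩ ⟨hxS, hxl⟩)

theorem IsLimitPoint.exists_between (h : IsLimitPoint S l) {c : Ordinal} (hc : c < l) :
    ∃ x ∈ S, c < x ∧ x < l :=
  (isLimitPoint_iff.1 h).2 c hc

theorem IsLimitPoint.mono (hST : S ⊆ T) (h : IsLimitPoint S l) : IsLimitPoint T l := by
  refine isLimitPoint_iff.2 ⟨h.1, fun c hc => ?_⟩
  obtain ⟨x, hx, hcx, hxl⟩ := h.exists_between hc
  exact ⟨x, hST hx, hcx, hxl⟩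

theorem not_isLimitPoint_of_isGreatest {m : Ordinal} (h : IsGreatest (S ∩ Iio l) m) :
    ¬ IsLimitPoint S l := fun hl => by
  obtain ⟨x, hx, hmx, hxl⟩ := hl.exists_between h.1.2
  exact (h.2 ⟨hx, hxl⟩).not_gt hmx

theorem isLimitPoint_union_setOf_isLimitPoint :
    IsLimitPoint (S ∪ {x | IsLimitPoint S x}) l ↔ IsLimitPoint S l := by
  refine ⟨fun h => isLimitPoint_iff.2 ⟨h.1, fun c hc => ?_⟩, IsLimitPoint.mono subset_union_left⟩
  obtain ⟨x, hx | hx, hcx, hxl⟩ := h.exists_between hc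
  · exact ⟨x, hx, hcx, hxl⟩
  · obtain ⟨y, hy, hcy, hyx⟩ := hx.exists_between hcx
    exact ⟨y, hy, hcy, hyx.trans hxl⟩

theorem IsClosedSet.sSup_mem (hS : IsClosedSet S) {t : Set Ordinal} (htS : t ⊆ S)
    (ht : t.Nonempty) (hbdd : BddAbove t) : sSup t ∈ S := by
  by_cases hmem : sSup t ∈ t
  · exact htS hmem
  have hlt : ∀ x ∈ t, x < sSup t := fun x hx =>
    (le_csSup hbdd hx).lt_of_ne fun h => hmem (h ▸ hx)
  refine hS _ (isLimitPoint_iff.2 ⟨zero_le.trans_lt (hlt _ ht.some_mem), fun c hc => ?_⟩)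
  obtain ⟨x, hx, hcx⟩ := exists_lt_of_lt_csSup ht hc
  exact ⟨x, htS hx, hcx, hlt x hx⟩

theorem Set.Countable.bddAbove_ordinal {B : Set Ordinal} (h : B.Countable) : BddAbove B := by
  have := h.to_subtype
  exact Ordinal.bddAbove_of_small

end LimitPoints

namespace Ordinal

variable {S : Set Ordinal}

theorem isGreatest_enumOrd_Iio_add_one (hS : ¬ BddAbove S) (o : Ordinal) :
    IsGreatest (S ∩ Iio (enumOrd S (o + 1))) (enumOrd S o) := by
  refine ⟨⟨enumOrd_mem hS o, enumOrd_strictMono hS (lt_add_one o)⟩, fun x ⟨hxS, hx⟩ => ?_⟩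
  by_contra! h
  exact (enumOrd_succ_le hS hxS h).not_gt hx

theorem isGreatest_enumOrd_Iio_add_nat_succ (hS : ¬ BddAbove S) (a : Ordinal) (n : ℕ) :
    IsGreatest (S ∩ Iio (enumOrd S (a + (n + 1 : ℕ)))) (enumOrd S (a + n)) := by
  simpa only [Nat.cast_add_one, add_assoc] using isGreatest_enumOrd_Iio_add_one hS (a + n)

theorem enumOrd_add_nat_mem_of_isGreatest_mem {T : Set Ordinal}
    (hT : ∀ β ∈ T, ∀ m, IsGreatest (S ∩ Iio β) m → m ∈ T) (hS : ¬ BddAbove S) {a : Ordinal}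
    {j k : ℕ} (hjk : j ≤ k) (hk : enumOrd S (a + k) ∈ T) : enumOrd S (a + j) ∈ T := by
  induction k, hjk using Nat.le_induction with
  | base => exact hk
  | succ k _ ih =>
    exact ih (hT _ hk _ (isGreatest_enumOrd_Iio_add_nat_succ hS a k))

theorem exists_nat_eq_enumOrd_add (hS : ¬ BddAbove S) {a x : Ordinal} (hx : x ∈ S)
    (h₁ : enumOrd S a ≤ x) (h₂ : x < enumOrd S (a + ω)) : ∃ n : ℕ, x = enumOrd S (a + n) := by
  obtain ⟨μ, rfl⟩ := enumOrd_surjective hS hx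
  obtain ⟨c, rfl⟩ := exists_add_of_le ((enumOrd_le_enumOrd hS).1 h₁)
  obtain ⟨n, rfl⟩ := lt_omega0.1 ((add_lt_add_iff_left a).1 ((enumOrd_lt_enumOrd hS).1 h₂))
  exact ⟨n, rfl⟩

theorem exists_lt_enumOrd_add_nat (hS : IsClosedSet S) (hSu : ¬ BddAbove S) {a c : Ordinal}
    (hc : c < enumOrd S (a + ω)) : ∃ n : ℕ, c < enumOrd S (a + n) := by
  have hnormal := isNormal_enumOrd (fun t ht hne hbdd => hS.sSup_mem ht hne hbdd) hSu
  obtain ⟨b, hb, hcb⟩ := (hnormal.lt_iff_exists_lt (isSuccLimit_add a isSuccLimit_omega0)).1 hc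
  obtain ⟨d, hd, hbd⟩ := (lt_add_iff omega0_ne_zero).1 hb
  obtain ⟨n, rfl⟩ := lt_omega0.1 hd
  exact ⟨n, hcb.trans_le (hnormal.monotone hbd)⟩

end Ordinal

theorem IsUnboundedSet.not_bddAbove {S : Set Ordinal} (h : IsUnboundedSet S) : ¬ BddAbove S :=
  fun ⟨u, hu⟩ => let ⟨_, hb, hub⟩ := h u; (hu hb).not_gt hub

section Gaps

variable {I B G H : Set Ordinal}

theorem IsGap.eq_of_mem (hG : IsGap I B G) (hH : IsGap I B H) {p : Ordinal} (hpG : p ∈ G)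
    (hpH : p ∈ H) : G = H := by
  have hconv : ∀ x ∈ G ∪ H, ∀ y ∈ G ∪ H, ∀ z ∈ I \ B, x ≤ z → z ≤ y → z ∈ G ∪ H := by
    intro x hx y hy z hz hxz hzy
    rcases le_or_gt z p with hzp | hpz
    · rcases hx with hx | hx
      · exact Or.inl (hG.2.2.1 x hx p hpG z hz hxz hzp)
      · exact Or.inr (hH.2.2.1 x hx p hpH z hz hxz hzp)
    · rcases hy with hy | hy
      · exact Or.inl (hG.2.2.1 p hpG y hy z hz hpz.le hzy)
      · exact Or.inr (hH.2.2.1 p hpH y hy z hz hpz.le hzy)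
  have hsub : G ∪ H ⊆ I \ B := union_subset hG.2.1 hH.2.1
  rw [← hG.2.2.2 _ subset_union_left hsub hconv, hH.2.2.2 _ subset_union_right hsub hconv]

theorem exists_isGap_mem {x : Ordinal} (hx : x ∈ I \ B) : ∃ G, IsGap I B G ∧ x ∈ G := by
  set U : Set Ordinal := {y | ∃ C : Set Ordinal, x ∈ C ∧ C ⊆ I \ B ∧
    (∀ a ∈ C, ∀ b ∈ C, ∀ z ∈ I \ B, a ≤ z → z ≤ b → z ∈ C) ∧ y ∈ C}
  have hxU : x ∈ U := by
    refine ⟨{x}, rfl, by simpa using hx, ?_, rfl⟩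
    rintro a rfl b rfl z - h₁ h₂
    exact le_antisymm h₂ h₁
  have hUconv : ∀ a ∈ U, ∀ b ∈ U, ∀ z ∈ I \ B, a ≤ z → z ≤ b → z ∈ U := by
    rintro a ⟨Ca, hxa, hCa, hconva, ha⟩ b ⟨Cb, hxb, hCb, hconvb, hb⟩ z hz haz hzb
    rcases le_or_gt z x with hzx | hxz
    · exact ⟨Ca, hxa, hCa, hconva, hconva a ha x hxa z hz haz hzx⟩
    · exact ⟨Cb, hxb, hCb, hconvb, hconvb x hxb b hb z hz hxz.le hzb⟩
  refine ⟨U, ⟨⟨x, hxU⟩, fun y ⟨C, _, hC, _, hy⟩ => hC hy, hUconv, ?_⟩, hxU⟩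
  exact fun C hUC hC hconv => (hUC.antisymm fun y hy => ⟨C, hUC hxU, hC, hconv, hy⟩).symm

theorem LimitSuitable.subset (hB : LimitSuitable I B) : B ⊆ I :=
  fun _ hx => hB.1.1 (Or.inl hx)

theorem LimitSuitable.countable (hB : LimitSuitable I B) : B.Countable :=
  hB.1.2.1.mono subset_union_left

theorem IsGap.gapFoot_le (hB : LimitSuitable I B) (hG : IsGap I B G) {g : Ordinal} (hg : g ∈ G) :
    GapFoot B G ≤ g := by
  rcases (hB.2 G hG).1 with ⟨-, hGeq⟩ | ⟨δ, -, -, -, hGeq⟩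
  · exact (hGeq ▸ hg).2
  · exact (hGeq ▸ hg).2.1

theorem IsGap.mem_of_le (hB : LimitSuitable I B) (hG : IsGap I B G) {x g : Ordinal} (hx : x ∈ I)
    (hGx : GapFoot B G ≤ x) (hg : g ∈ G) (hxg : x ≤ g) : x ∈ G := by
  rcases (hB.2 G hG).1 with ⟨-, hGeq⟩ | ⟨δ, -, -, -, hGeq⟩
  · exact hGeq ▸ ⟨hx, hGx⟩
  · exact hGeq ▸ ⟨hx, hGx, hxg.trans_lt (hGeq ▸ hg).2.2⟩

/-- Past a point of `I \ B`, the first member of `B` closes a bounded gap, so it is a limit point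
of `I` of uncountable cofinality. -/
theorem exists_isLimitPoint_mem_Ioc (hB : LimitSuitable I B) {x β : Ordinal} (hx : x ∈ I \ B)
    (hβ : β ∈ B) (hxβ : x < β) :
    ∃ d ∈ B, x < d ∧ d ≤ β ∧ IsLimitPoint I d ∧ Cardinal.aleph0 < d.cof := by
  obtain ⟨H, hH, hxH⟩ := exists_isGap_mem hx
  have hβH : β ∉ H := fun h => (hH.2.1 h).2 hβ
  have hHβ : GapFoot B H ≤ β := (hH.gapFoot_le hB hxH).trans hxβ.le
  rcases (hB.2 H hH).1 with ⟨-, hHeq⟩ | ⟨δ, hδ, hδI, hδcof, hHeq⟩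
  · exact absurd (hHeq ▸ ⟨hB.subset hβ, hHβ⟩) hβH
  · refine ⟨δ, hδ.1.1, hδ.1.2 x hxH, le_of_not_gt fun hβδ => hβH ?_, hδI, hδcof⟩
    exact hHeq ▸ ⟨hB.subset hβ, hHβ, hβδ⟩

theorem IsGap.gapFoot_ne_zero (hB : LimitSuitable I B) (hmin : sInf I ∈ B) (hG : IsGap I B G) :
    GapFoot B G ≠ 0 := fun h => by
  obtain ⟨g, hg⟩ := hG.1
  have hgI : g ∈ I := (hG.2.1 hg).1
  have hminG : sInf I ∈ G := hG.mem_of_le hB (csInf_mem ⟨g, hgI⟩) (h ▸ zero_le) hg (csInf_le' hgI)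
  exact (hG.2.1 hminG).2 hmin

theorem IsGap.exists_gapFoot_eq_enumOrd (hB : LimitSuitable I B) (hmin : sInf I ∈ B)
    (hG : IsGap I B G) : ∃ ν, GapFoot B G = Ordinal.enumOrd I (ν + Ordinal.omega0) :=
  (hB.2 G hG).2 (hG.gapFoot_ne_zero hB hmin)

theorem IsGap.gapFoot_mem (hI : IsUnboundedSet I) (hB : LimitSuitable I B) (hmin : sInf I ∈ B)
    (hG : IsGap I B G) : GapFoot B G ∈ G := by
  obtain ⟨ν, hν⟩ := hG.exists_gapFoot_eq_enumOrd hB hmin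
  obtain ⟨g, hg⟩ := hG.1
  exact hG.mem_of_le hB (hν ▸ Ordinal.enumOrd_mem hI.not_bddAbove _) le_rfl hg
    (hG.gapFoot_le hB hg)

theorem IsGap.sInf_eq (hI : IsUnboundedSet I) (hB : LimitSuitable I B) (hmin : sInf I ∈ B)
    (hG : IsGap I B G) : sInf G = GapFoot B G :=
  (csInf_le' (hG.gapFoot_mem hI hB hmin)).antisymm (le_csInf hG.1 fun _ => hG.gapFoot_le hB)

theorem IsGap.isLimitPoint_gapFoot (hI : IsUnboundedSet I) (hB : LimitSuitable I B)
    (hmin : sInf I ∈ B) (hG : IsGap I B G) : IsLimitPoint B (GapFoot B G) := by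
  have hfoot := hG.gapFoot_mem hI hB hmin
  have hne : (B ∩ Iio (GapFoot B G)).Nonempty := by
    refine ⟨sInf I, hmin, (csInf_le' (hG.2.1 hfoot).1).lt_of_ne fun h => ?_⟩
    exact (hG.2.1 hfoot).2 (h ▸ hmin)
  have h : GapFoot B G = sSup (insert 0 (B ∩ Iio (GapFoot B G))) := by
    conv_lhs => rw [GapFoot, hG.sInf_eq hI hB hmin]
    rfl
  rw [csSup_insert ⟨_, fun _ hx => hx.2.le⟩ hne, sup_eq_right.2 zero_le] at h
  exact ⟨pos_iff_ne_zero.2 (hG.gapFoot_ne_zero hB hmin), h.symm⟩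

end Gaps

/-- The `σ'` of a gap: its tail is `B ∩ (σ', λ)`. -/
def TailStart (I B G : Set Ordinal) : Ordinal :=
  sSup {β ∈ B | β < sInf G ∧ IsLimitPoint I β}

/-- The `δ'` of a gap: its closed blocks are `[δ', γ) ∩ B`. -/
def BlockStart (I B G : Set Ordinal) : Ordinal :=
  sSup ((I \ B) ∩ Iio (GapFoot B G))

section Tails

open Ordinal

variable {I B G H : Set Ordinal}

theorem le_blockStart {x : Ordinal} (hx : x ∈ (I \ B) ∩ Iio (GapFoot B G)) :
    x ≤ BlockStart I B G :=
  le_csSup ⟨GapFoot B G, fun _ hy => hy.2.le⟩ hx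

theorem IsGap.le_tailStart (hI : IsUnboundedSet I) (hB : LimitSuitable I B) (hmin : sInf I ∈ B)
    (hG : IsGap I B G) {d : Ordinal} (hd : d ∈ B) (hdI : IsLimitPoint I d)
    (hdG : d < GapFoot B G) : d ≤ TailStart I B G :=
  le_csSup (hB.countable.bddAbove_ordinal.mono fun _ h => h.1)
    ⟨hd, (hG.sInf_eq hI hB hmin).symm ▸ hdG, hdI⟩

theorem IsGap.lt_tailStart (hI : IsUnboundedSet I) (hB : LimitSuitable I B) (hmin : sInf I ∈ B)
    (hG : IsGap I B G) {x : Ordinal} (hx : x ∈ I \ B)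
    (hxG : x < GapFoot B G) : x < TailStart I B G := by
  obtain ⟨β, hβ, hxβ, hβG⟩ := (hG.isLimitPoint_gapFoot hI hB hmin).exists_between hxG
  obtain ⟨d, hd, hxd, hdβ, hdI, -⟩ := exists_isLimitPoint_mem_Ioc hB hx hβ hxβ
  exact hxd.trans_le (hG.le_tailStart hI hB hmin hd hdI (hdβ.trans_lt hβG))

theorem IsGap.not_isLimitPoint_of_mem_gapTail (hI : IsUnboundedSet I) (hB : LimitSuitable I B) (hmin : sInf I ∈ B)
    (hG : IsGap I B G) {γ : Ordinal}
    (hγ : γ ∈ GapTail I B G) : ¬ IsLimitPoint I γ := fun h =>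
  (hG.le_tailStart hI hB hmin hγ.1 h hγ.2.2).not_gt hγ.2.1

theorem IsGap.gapFoot_le_of_mem_gapTail (hI : IsUnboundedSet I) (hB : LimitSuitable I B) (hmin : sInf I ∈ B)
    (hG : IsGap I B G) (hH : IsGap I B H) {γ : Ordinal}
    (hγ : γ ∈ GapTail I B G) (hγH : γ < GapFoot B H) : GapFoot B G ≤ GapFoot B H :=
  le_of_not_gt fun h => (hG.lt_tailStart hI hB hmin (hH.2.1 (hH.gapFoot_mem hI hB hmin)) h).not_gt
    (hγ.2.1.trans hγH)

theorem IsGap.eq_of_mem_gapTail (hI : IsUnboundedSet I) (hB : LimitSuitable I B) (hmin : sInf I ∈ B)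
    (hG : IsGap I B G) (hH : IsGap I B H) {γ : Ordinal}
    (hγG : γ ∈ GapTail I B G) (hγH : γ ∈ GapTail I B H) : G = H := by
  have hfoot : GapFoot B G = GapFoot B H :=
    (hG.gapFoot_le_of_mem_gapTail hI hB hmin hH hγG hγH.2.2).antisymm
      (hH.gapFoot_le_of_mem_gapTail hI hB hmin hG hγH hγG.2.2)
  exact hG.eq_of_mem hH (hG.gapFoot_mem hI hB hmin) (hfoot ▸ hH.gapFoot_mem hI hB hmin)

theorem IsGap.enumOrd_add_nat_succ_mem (hI : IsUnboundedSet I) (hB : LimitSuitable I B) (hmin : sInf I ∈ B)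
    (hG : IsGap I B G) {ν : Ordinal}
    (hν : GapFoot B G = enumOrd I (ν + ω)) (n : ℕ) : enumOrd I (ν + (n + 1 : ℕ)) ∈ B := by
  have hI' := hI.not_bddAbove
  obtain ⟨β, hβ, hnβ, hβG⟩ := (hG.isLimitPoint_gapFoot hI hB hmin).exists_between
    (hν ▸ (enumOrd_lt_enumOrd hI').2 ((add_lt_add_iff_left ν).2 (natCast_lt_omega0 (n + 1))))
  obtain ⟨k, rfl⟩ := exists_nat_eq_enumOrd_add hI' (hB.subset hβ)
    (((enumOrd_le_enumOrd hI').2 le_self_add).trans hnβ.le) (hν ▸ hβG)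
  have hnk : n + 1 ≤ k := by
    exact_mod_cast ((add_lt_add_iff_left ν).1 ((enumOrd_lt_enumOrd hI').1 hnβ)).le
  rcases enumOrd_add_nat_mem_of_isGreatest_mem hB.1.2.2.2.2 hI' hnk (Or.inl hβ) with h | h
  · exact h
  · exact absurd (h.mono hB.subset)
      (not_isLimitPoint_of_isGreatest (isGreatest_enumOrd_Iio_add_nat_succ hI' ν n))

theorem IsGap.tailStart_le (hI : IsUnboundedSet I) (hB : LimitSuitable I B) (hmin : sInf I ∈ B)
    (hG : IsGap I B G) {ν : Ordinal} (hν : GapFoot B G = enumOrd I (ν + ω)) :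
    TailStart I B G ≤ enumOrd I ν := by
  have hI' := hI.not_bddAbove
  refine csSup_le' fun β ⟨hβB, hβG, hβI⟩ => le_of_not_gt fun hνβ => ?_
  rw [hG.sInf_eq hI hB hmin, hν] at hβG
  obtain ⟨_ | n, rfl⟩ := exists_nat_eq_enumOrd_add hI' (hB.subset hβB) hνβ.le hβG
  · simp at hνβ
  · exact not_isLimitPoint_of_isGreatest (isGreatest_enumOrd_Iio_add_nat_succ hI' ν n) hβI

theorem IsGap.exists_mem_gapTail_gt (hIcl : IsClosedSet I) (hI : IsUnboundedSet I)
    (hB : LimitSuitable I B) (hmin : sInf I ∈ B) (hG : IsGap I B G) {c : Ordinal}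
    (hc : c < GapFoot B G) : ∃ γ ∈ GapTail I B G, c < γ := by
  have hI' := hI.not_bddAbove
  obtain ⟨ν, hν⟩ := hG.exists_gapFoot_eq_enumOrd hB hmin
  have hlt : ∀ n : ℕ, enumOrd I (ν + n) < GapFoot B G := fun n =>
    hν ▸ (enumOrd_lt_enumOrd hI').2 ((add_lt_add_iff_left ν).2 (natCast_lt_omega0 n))
  have hν0 : enumOrd I ν < GapFoot B G := by simpa using hlt 0
  obtain ⟨n, hn⟩ := exists_lt_enumOrd_add_nat hIcl hI' (hν ▸ max_lt hc hν0)
  have hnn : enumOrd I (ν + n) < enumOrd I (ν + (n + 1 : ℕ)) :=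
    (enumOrd_lt_enumOrd hI').2 ((add_lt_add_iff_left ν).2 (by exact_mod_cast n.lt_succ_self))
  refine ⟨_, ⟨hG.enumOrd_add_nat_succ_mem hI hB hmin hν n, ?_, hlt (n + 1)⟩,
    (le_max_left _ _).trans_lt (hn.trans hnn)⟩
  exact (hG.tailStart_le hI hB hmin hν).trans_lt ((le_max_right _ _).trans_lt (hn.trans hnn))

end Tails

section DeterminedSub

variable {I B G b : Set Ordinal}

theorem determinedSub_subset : DeterminedSub I B b ⊆ B :=
  fun _ ⟨_, _, _, _, _, hx⟩ => hx.2

theorem exists_isGap_blockStart_le (hI : IsUnboundedSet I) (hB : LimitSuitable I B) {l : Ordinal}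
    (hl : l ∈ B) : ∃ G, IsGap I B G ∧ BlockStart I B G ≤ l ∧ l < GapFoot B G := by
  obtain ⟨u, hu⟩ := hB.countable.bddAbove_ordinal
  obtain ⟨y, hyI, huy⟩ := hI u
  have hne : ((I \ B) ∩ Ioi l).Nonempty :=
    ⟨y, ⟨hyI, fun h => (hu h).not_gt huy⟩, (hu hl).trans_lt huy⟩
  obtain ⟨hm, hlm⟩ := csInf_mem hne
  obtain ⟨G, hG, hmG⟩ := exists_isGap_mem hm
  have hGm : GapFoot B G ≤ sInf ((I \ B) ∩ Ioi l) := hG.gapFoot_le hB hmG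
  refine ⟨G, hG, csSup_le' fun x ⟨hx, hxG⟩ => le_of_not_gt fun hlx => ?_, ?_⟩
  · exact (csInf_le' (s := (I \ B) ∩ Ioi l) ⟨hx, hlx⟩).not_gt (hxG.trans_le hGm)
  · exact lt_of_not_ge fun hGl => (hG.2.1 (hG.mem_of_le hB (hB.subset hl) hGl hmG hlm.le)).2 hl

theorem mem_determinedSub_of_isLimitPoint (hI : IsUnboundedSet I) (hB : LimitSuitable I B)
    (hmin : sInf I ∈ B) (hb : TailTraversal I B b) {d : Ordinal} (hd : d ∈ B)
    (hdI : IsLimitPoint I d) : d ∈ DeterminedSub I B b := by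
  obtain ⟨G, hG, hGd, hdG⟩ := exists_isGap_blockStart_le hI hB hd
  obtain ⟨γ, ⟨hγb, hγG⟩, -⟩ := hb.2.1 G hG
  exact ⟨γ, hγb, G, hG, hγG, ⟨hGd, (hG.le_tailStart hI hB hmin hd hdI hdG).trans_lt hγG.2.1⟩, hd⟩

theorem lt_of_mem_determinedSub (hI : IsUnboundedSet I) (hB : LimitSuitable I B)
    (hmin : sInf I ∈ B) (hb : TailTraversal I B b) (hG : IsGap I B G) {γ x : Ordinal}
    (hγb : γ ∈ b) (hγG : γ ∈ GapTail I B G) (hx : x ∈ DeterminedSub I B b)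
    (hxG : x < GapFoot B G) : x < γ := by
  obtain ⟨γ', hγ'b, G', hG', hγ'G', ⟨hG'x, hxγ'⟩, -⟩ := hx
  have hfoot' := hG'.gapFoot_mem hI hB hmin
  rcases lt_trichotomy (GapFoot B G') (GapFoot B G) with h | h | h
  · exact hxγ'.trans (hγ'G'.2.2.trans
      ((hG.lt_tailStart hI hB hmin (hG'.2.1 hfoot') h).trans hγG.2.1))
  · obtain rfl : G' = G := hG'.eq_of_mem hG hfoot' (h ▸ hG.gapFoot_mem hI hB hmin)
    exact ((hb.2.1 G' hG).unique ⟨hγ'b, hγ'G'⟩ ⟨hγb, hγG⟩) ▸ hxγ'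
  · have hfoot := hG.2.1 (hG.gapFoot_mem hI hB hmin)
    exact absurd ((le_blockStart ⟨hfoot, h⟩).trans hG'x) hxG.not_ge

theorem not_isLimitPoint_determinedSub (hI : IsUnboundedSet I) (hB : LimitSuitable I B)
    (hmin : sInf I ∈ B) (hb : TailTraversal I B b) (hG : IsGap I B G) {γ l : Ordinal}
    (hγb : γ ∈ b) (hγG : γ ∈ GapTail I B G) (hγl : γ < l) (hlG : l ≤ GapFoot B G) :
    ¬ IsLimitPoint (DeterminedSub I B b) l := fun h => by
  obtain ⟨x, hx, hγx, hxl⟩ := h.exists_between hγl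
  exact (lt_of_mem_determinedSub hI hB hmin hb hG hγb hγG hx (hxl.trans_le hlG)).not_gt hγx

theorem isClosedSet_determinedSub (hI : IsUnboundedSet I) (hB : LimitSuitable I B)
    (hmin : sInf I ∈ B) (hb : TailTraversal I B b) : IsClosedSet (DeterminedSub I B b) := by
  intro l hl
  have hlB : IsLimitPoint B l := hl.mono determinedSub_subset
  have hlB' : l ∈ B := by
    by_contra hlB'
    obtain ⟨H, hH, hlH⟩ := exists_isGap_mem ⟨hB.1.1 (Or.inr hlB), hlB'⟩
    have hlfoot : l ≤ GapFoot B H := le_of_not_gt fun hHl => by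
      obtain ⟨x, hx, hHx, hxl⟩ := hlB.exists_between hHl
      exact (hH.2.1 (hH.mem_of_le hB (hB.subset hx) hHx.le hlH hxl.le)).2 hx
    obtain ⟨γ, ⟨hγb, hγH⟩, -⟩ := hb.2.1 H hH
    exact not_isLimitPoint_determinedSub hI hB hmin hb hH hγb hγH
      (hγH.2.2.trans_le (hH.gapFoot_le hB hlH)) hlfoot hl
  obtain ⟨G, hG, hGl, hlG⟩ := exists_isGap_blockStart_le hI hB hlB'
  obtain ⟨γ, ⟨hγb, hγG⟩, -⟩ := hb.2.1 G hG
  rcases lt_trichotomy l γ with h | rfl | h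
  · exact ⟨γ, hγb, G, hG, hγG, ⟨hGl, h⟩, hlB'⟩
  · exact absurd (hlB.mono hB.subset) (hG.not_isLimitPoint_of_mem_gapTail hI hB hmin hγG)
  · exact absurd hl (not_isLimitPoint_determinedSub hI hB hmin hb hG hγb hγG h hlG.le)

theorem isLimitPoint_determinedSub (hI : IsUnboundedSet I) (hB : LimitSuitable I B)
    (hmin : sInf I ∈ B) (hb : TailTraversal I B b) {β : Ordinal} (hβ : β ∈ DeterminedSub I B b)
    (hβI : IsLimitPoint I β) (hβcof : β.cof ≤ Cardinal.aleph0) :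
    IsLimitPoint (DeterminedSub I B b) β := by
  obtain ⟨γ, hγb, G, hG, hγG, ⟨hGβ, hβγ⟩, hβB⟩ := hβ
  change BlockStart I B G ≤ β at hGβ
  have hβlim : IsLimitPoint B β :=
    isLimitPoint_union_setOf_isLimitPoint.1 (hB.1.2.2.2.1 β (Or.inl hβB) hβI hβcof)
  refine isLimitPoint_iff.2 ⟨hβI.1, fun c hc => ?_⟩
  rcases hGβ.lt_or_eq with hGβ | hGβ
  · obtain ⟨x, hx, hcx, hxβ⟩ := hβlim.exists_between (max_lt hc hGβ)
    exact ⟨x, ⟨γ, hγb, G, hG, hγG, ⟨(le_max_right _ _).trans hcx.le, hxβ.trans hβγ⟩, hx⟩,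
      (le_max_left _ _).trans_lt hcx, hxβ⟩
  · -- `β` is a limit of points of `I \ B`, each followed in `B` by a limit point of `I`
    -- of uncountable cofinality, hence different from `β`
    obtain ⟨x, hx, hcx⟩ := exists_lt_of_lt_csSup' (hGβ ▸ hc : c < BlockStart I B G)
    have hxβ : x < β := (hGβ ▸ le_blockStart hx).lt_of_ne fun h => hx.1.2 (h ▸ hβB)
    obtain ⟨d, hd, hxd, hdβ, hdI, hdcof⟩ := exists_isLimitPoint_mem_Ioc hB hx.1 hβB hxβ
    refine ⟨d, mem_determinedSub_of_isLimitPoint hI hB hmin hb hd hdI, hcx.trans hxd, ?_⟩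
    exact hdβ.lt_of_ne fun h => (h ▸ hdcof).not_ge hβcof

theorem mem_determinedSub_of_isGreatest (hB : LimitSuitable I B) {β m : Ordinal}
    (hβ : β ∈ DeterminedSub I B b) (hm : IsGreatest (I ∩ Iio β) m) : m ∈ DeterminedSub I B b := by
  obtain ⟨γ, hγb, G, hG, hγG, ⟨hGβ, hβγ⟩, hβB⟩ := hβ
  have hmB : m ∈ B := by
    by_contra hmB
    obtain ⟨d, hd, hmd, hdβ, hdI, -⟩ := exists_isLimitPoint_mem_Ioc hB ⟨hm.1.1, hmB⟩ hβB hm.1.2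
    obtain rfl : d = β := hdβ.antisymm (le_of_not_gt fun h => (hm.2 ⟨hB.subset hd, h⟩).not_gt hmd)
    exact not_isLimitPoint_of_isGreatest hm hdI
  refine ⟨γ, hγb, G, hG, hγG, ⟨csSup_le' fun x hx => hm.2 ⟨hx.1.1, ?_⟩, hm.1.2.trans hβγ⟩, hmB⟩
  exact ((le_blockStart hx).trans hGβ).lt_of_ne fun h => hx.1.2 (h ▸ hβB)

theorem suitable_determinedSub (hI : IsUnboundedSet I) (hB : LimitSuitable I B)
    (hmin : sInf I ∈ B) (hb : TailTraversal I B b) : Suitable I (DeterminedSub I B b) :=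
  ⟨determinedSub_subset.trans hB.subset, hB.countable.mono determinedSub_subset,
    isClosedSet_determinedSub hI hB hmin hb,
    fun _ hβ hβI hβcof => isLimitPoint_determinedSub hI hB hmin hb hβ hβI hβcof,
    fun _ hβ _ hm => mem_determinedSub_of_isGreatest hB hβ hm⟩

end DeterminedSub

theorem Suitable.exists_tailTraversal_subset_determinedSub {I B Bhat : Set Ordinal}
    (hIcl : IsClosedSet I) (hI : IsUnboundedSet I) (hB : LimitSuitable I B) (hmin : sInf I ∈ B)
    (hBhat : Suitable I Bhat) (hsub : Bhat ⊆ B) :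
    ∃ b, TailTraversal I B b ∧ Bhat ⊆ DeterminedSub I B b := by
  -- `Bhat` is closed and each foot is a limit point of `B` outside `B`
  have hbounded : ∀ G, IsGap I B G → sSup (Bhat ∩ Iio (GapFoot B G)) < GapFoot B G := by
    intro G hG
    refine (csSup_le' fun _ hx => hx.2.le).lt_of_ne fun h => ?_
    have hfoot := hG.2.1 (hG.gapFoot_mem hI hB hmin)
    exact hfoot.2 (hsub (hBhat.2.2.1 _ ⟨(hG.isLimitPoint_gapFoot hI hB hmin).1, h⟩))
  choose f hf using fun G (hG : IsGap I B G) =>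
    hG.exists_mem_gapTail_gt hIcl hI hB hmin (hbounded G hG)
  refine ⟨{γ | ∃ G, ∃ hG : IsGap I B G, γ = f G hG}, ⟨?_, fun G hG => ?_, ?_⟩, fun x hx => ?_⟩
  · rintro _ ⟨G, hG, rfl⟩
    exact (hf G hG).1.1
  · refine ⟨f G hG, ⟨⟨G, hG, rfl⟩, (hf G hG).1⟩, ?_⟩
    rintro _ ⟨⟨G', hG', rfl⟩, hG'G⟩
    obtain rfl := hG'.eq_of_mem_gapTail hI hB hmin hG (hf G' hG').1 hG'G
    rfl
  · rintro _ ⟨G, hG, rfl⟩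
    exact ⟨G, hG, (hf G hG).1⟩
  · obtain ⟨G, hG, hGx, hxG⟩ := exists_isGap_blockStart_le hI hB (hsub hx)
    have hx' : x ≤ sSup (Bhat ∩ Iio (GapFoot B G)) := le_csSup ⟨_, fun _ hy => hy.2.le⟩ ⟨hx, hxG⟩
    exact ⟨f G hG, ⟨G, hG, rfl⟩, G, hG, (hf G hG).1, ⟨hGx, hx'.trans_lt (hf G hG).2⟩, hsub hx⟩

/-- For a limit suitable `B` containing `min I`: (1) the subsequence of `B` determined by any
tail traversal is suitable; (2) every suitable subset of `B` is contained in the subsequence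
determined by some tail traversal. -/
theorem stmt8 (I B : Set Ordinal) (hIcl : IsClosedSet I) (hIunb : IsUnboundedSet I)
    (hB : LimitSuitable I B) (hmin : sInf I ∈ B) :
    (∀ b, TailTraversal I B b → Suitable I (DeterminedSub I B b)) ∧
    (∀ Bhat, Suitable I Bhat → Bhat ⊆ B →
      ∃ b, TailTraversal I B b ∧ Bhat ⊆ DeterminedSub I B b) :=
  ⟨fun _ hb => suitable_determinedSub hIunb hB hmin hb,
    fun _ hBhat hsub => hBhat.exists_tailTraversal_subset_determinedSub hIcl hIunb hB hmin hsub⟩
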